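/- Let (Ω, ℱ, P) be a probability space, X : Ω → ℝ^q a random vector whose first coordinate is the constant 1, Y : Ω → {0,1} with P(Y = 1 | σ(X)) = expit(β₀ᵀX) almost surely, s : ℝ^q → 𝒮 measurable, π : {0,1} × 𝒮 → (0,1] measurable, and R : Ω → {0,1} with E[R | σ(Y, X)] = π(Y, s(X)) almost surely. Define the offset-adjusted linear predictor γ(x) := β₀ᵀx + log( π(1, s(x)) / π(0, s(x)) ). Then for every bounded measurable g : ℝ^q → ℝ, E[ R · (Y − expit(γ(X))) · g(X) ] = 0. -/

import Mathlib

/-!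
Conditioning on `(Y, X)` replaces `R` by `π(Y, s(X))`; since `Y` is binary, conditioning on `X`
then replaces the remaining dependence on `Y` by the mixture with weights `expit(β₀ᵀX)` and
`1 - expit(β₀ᵀX)`. The integrand becomes pointwise zero because the offset turns the odds
`exp(β₀ᵀx)` into `exp(γ(x)) = exp(β₀ᵀx) π(1, s(x)) / π(0, s(x))`, which is exactly the balance
`π(1, s) expit(β₀ᵀx) (1 - expit γ) = π(0, s) (1 - expit(β₀ᵀx)) expit γ`.
-/

open MeasureTheory

/-- The standard logistic (expit) function. -/
noncomputable def expit (t : ℝ) : ℝ := Real.exp t / (1 + Real.exp t)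

@[fun_prop]
lemma measurable_expit : Measurable expit := by
  unfold expit; fun_prop

lemma expit_mem_Icc (t : ℝ) : expit t ∈ Set.Icc (0 : ℝ) 1 := by
  unfold expit
  exact ⟨by positivity, (div_le_one (by positivity)).2 (by linarith [Real.exp_pos t])⟩

lemma abs_sub_expit_le_one {y : ℝ} (hy : y = 0 ∨ y = 1) (t : ℝ) : |y - expit t| ≤ 1 := by
  obtain ⟨h0, h1⟩ := expit_mem_Icc t
  rcases hy with rfl | rfl <;> rw [abs_le] <;> constructor <;> linarith

lemma mul_expit_mul_one_sub_expit_add_log_div {a b : ℝ} (ha : 0 < a) (hb : 0 < b) (t : ℝ) :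
    a * expit t * (1 - expit (t + Real.log (a / b))) =
      b * (1 - expit t) * expit (t + Real.log (a / b)) := by
  have hexp : Real.exp (t + Real.log (a / b)) = Real.exp t * a / b := by
    rw [Real.exp_add, Real.exp_log (div_pos ha hb), mul_div_assoc]
  unfold expit
  rw [hexp]
  have : 0 < Real.exp t := Real.exp_pos t
  field_simp
  ring

section Conditioning

variable {Ω : Type*} [m0 : MeasurableSpace Ω] {μ : Measure Ω} [IsFiniteMeasure μ]

lemma integrable_of_forall_eq_zero_or_eq_one {Z : Ω → ℝ} (hZ : Measurable Z)
    (hZ01 : ∀ ω, Z ω = 0 ∨ Z ω = 1) : Integrable Z μ :=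
  .of_bound hZ.aestronglyMeasurable 1
    (ae_of_all _ fun ω => by rcases hZ01 ω with h | h <;> simp [h])

lemma integral_mul_eq_of_condExp_ae_eq {m : MeasurableSpace Ω} (hm : m ≤ m0)
    {r f ρ : Ω → ℝ} {C : ℝ} (hf : Measurable[m] f) (hfC : ∀ ω, |f ω| ≤ C)
    (hr : Integrable r μ) (hρ : μ[r|m] =ᵐ[μ] ρ) :
    ∫ ω, r ω * f ω ∂μ = ∫ ω, ρ ω * f ω ∂μ := by
  have hrf : Integrable (r * f) μ :=
    hr.mul_bdd (hf.mono hm le_rfl).aestronglyMeasurable (ae_of_all _ hfC)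
  calc ∫ ω, r ω * f ω ∂μ = ∫ ω, (μ[r * f|m]) ω ∂μ := (integral_condExp hm).symm
    _ = ∫ ω, (μ[r|m] * f) ω ∂μ :=
        integral_congr_ae (condExp_mul_of_stronglyMeasurable_right hf.stronglyMeasurable hrf hr)
    _ = ∫ ω, ρ ω * f ω ∂μ := integral_congr_ae (hρ.mono fun ω h => by simp only [Pi.mul_apply, h])

/-- Law of total expectation for a `{0, 1}`-valued `Y` with `P(Y = 1 | X) = p(X)`. -/
lemma integral_comp_binary_eq_of_condExp_ae_eq {E : Type*} [MeasurableSpace E]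
    {X : Ω → E} {Y : Ω → ℝ} {p : E → ℝ} {F : ℝ → E → ℝ} {C : ℝ}
    (hX : Measurable X) (hY : Measurable Y) (hY01 : ∀ ω, Y ω = 0 ∨ Y ω = 1)
    (hp : μ[Y|MeasurableSpace.comap X inferInstance] =ᵐ[μ] fun ω => p (X ω))
    (hF0 : Measurable (F 0)) (hF1 : Measurable (F 1))
    (hF0C : ∀ x, |F 0 x| ≤ C) (hF1C : ∀ x, |F 1 x| ≤ C) :
    ∫ ω, F (Y ω) (X ω) ∂μ = ∫ ω, p (X ω) * F 1 (X ω) + (1 - p (X ω)) * F 0 (X ω) ∂μ := by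
  set D : Ω → ℝ := fun ω => F 1 (X ω) - F 0 (X ω)
  have hDm : Measurable[MeasurableSpace.comap X inferInstance] D :=
    (hF1.sub hF0).comp (comap_measurable X)
  have hDC : ∀ ω, |D ω| ≤ 2 * C := fun ω =>
    (abs_sub _ _).trans ((add_le_add (hF1C _) (hF0C _)).trans_eq (two_mul C).symm)
  have hYi : Integrable Y μ := integrable_of_forall_eq_zero_or_eq_one hY hY01
  have hF0i : Integrable (fun ω => F 0 (X ω)) μ :=
    .of_bound (hF0.comp hX).aestronglyMeasurable C (ae_of_all _ fun ω => hF0C _)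
  have hDm0 : AEStronglyMeasurable D μ := (hDm.mono hX.comap_le le_rfl).aestronglyMeasurable
  calc ∫ ω, F (Y ω) (X ω) ∂μ = ∫ ω, Y ω * D ω + F 0 (X ω) ∂μ := by
        congr 1; ext ω; rcases hY01 ω with h | h <;> simp [D, h]
    _ = ∫ ω, p (X ω) * D ω + F 0 (X ω) ∂μ := by
        rw [integral_add (hYi.mul_bdd hDm0 (ae_of_all _ hDC)) hF0i,
          integral_add ((integrable_condExp.congr hp).mul_bdd hDm0 (ae_of_all _ hDC)) hF0i,
          integral_mul_eq_of_condExp_ae_eq hX.comap_le hDm hDC hYi hp]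
    _ = _ := by congr 1; ext ω; ring

end Conditioning

theorem stmt7_general {Ω : Type*} [MeasurableSpace Ω] (μ : Measure Ω) [IsProbabilityMeasure μ]
    {q : ℕ} {𝒮 : Type*} [MeasurableSpace 𝒮]
    (X : Ω → (Fin (q + 1) → ℝ)) (Y R : Ω → ℝ) (β₀ : Fin (q + 1) → ℝ)
    (s : (Fin (q + 1) → ℝ) → 𝒮) (π : ℝ → 𝒮 → ℝ)
    (hX : Measurable X) (hY : Measurable Y) (hR : Measurable R) (hs : Measurable s)
    (hπ : Measurable fun p : ℝ × 𝒮 => π p.1 p.2)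
    (hY01 : ∀ ω, Y ω = 0 ∨ Y ω = 1) (hR01 : ∀ ω, R ω = 0 ∨ R ω = 1)
    (hπrange : ∀ y ∈ ({0, 1} : Set ℝ), ∀ st, π y st ∈ Set.Ioc (0 : ℝ) 1)
    (hmodel : μ[Y | MeasurableSpace.comap X inferInstance] =ᵐ[μ]
      fun ω => expit (∑ i, β₀ i * X ω i))
    (hsel : μ[R | MeasurableSpace.comap (fun ω => (Y ω, X ω)) inferInstance] =ᵐ[μ]
      fun ω => π (Y ω) (s (X ω)))
    (g : (Fin (q + 1) → ℝ) → ℝ) (hgm : Measurable g) (M : ℝ) (hgb : ∀ x, |g x| ≤ M) :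
    ∫ ω, R ω * ((Y ω - expit ((∑ i, β₀ i * X ω i) +
      Real.log (π 1 (s (X ω)) / π 0 (s (X ω))))) * g (X ω)) ∂μ = 0 := by
  set γ : (Fin (q + 1) → ℝ) → ℝ := fun x =>
    (∑ i, β₀ i * x i) + Real.log (π 1 (s x) / π 0 (s x))
  have hπs : ∀ y, Measurable fun x => π y (s x) := fun y => hπ.comp (measurable_const.prodMk hs)
  have hγ : Measurable γ := by fun_prop
  have hresid : ∀ y, (y = 0 ∨ y = 1) → ∀ x, |(y - expit (γ x)) * g x| ≤ M := fun y hy x => by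
    rw [abs_mul]
    exact (mul_le_of_le_one_left (abs_nonneg _) (abs_sub_expit_le_one hy _)).trans (hgb x)
  set F : ℝ → (Fin (q + 1) → ℝ) → ℝ := fun y x => π y (s x) * ((y - expit (γ x)) * g x)
  have hFbound : ∀ y, (y = 0 ∨ y = 1) → ∀ x, |F y x| ≤ M := fun y hy x => by
    obtain ⟨hpos, hle⟩ := hπrange y hy (s x)
    rw [abs_mul, abs_of_pos hpos]
    exact (mul_le_of_le_one_left (abs_nonneg _) hle).trans (hresid y hy x)
  calc _ = ∫ ω, F (Y ω) (X ω) ∂μ :=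
        integral_mul_eq_of_condExp_ae_eq (hY.prodMk hX).comap_le
          ((show Measurable fun p : ℝ × (Fin (q + 1) → ℝ) => (p.1 - expit (γ p.2)) * g p.2 by
            fun_prop).comp (comap_measurable _))
          (fun ω => hresid _ (hY01 ω) _) (integrable_of_forall_eq_zero_or_eq_one hR hR01) hsel
    _ = ∫ ω, expit (∑ i, β₀ i * X ω i) * F 1 (X ω) +
          (1 - expit (∑ i, β₀ i * X ω i)) * F 0 (X ω) ∂μ :=
        integral_comp_binary_eq_of_condExp_ae_eq
          (p := fun x : Fin (q + 1) → ℝ => expit (∑ i, β₀ i * x i)) hX hY hY01 hmodel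
          (by fun_prop) (by fun_prop) (hFbound 0 (.inl rfl)) (hFbound 1 (.inr rfl))
    _ = 0 := by
        refine (integral_congr_ae (ae_of_all _ fun ω => ?_)).trans (integral_zero _ _)
        have := mul_expit_mul_one_sub_expit_add_log_div (hπrange 1 (.inr rfl) (s (X ω))).1
          (hπrange 0 (.inl rfl) (s (X ω))).1 (∑ i, β₀ i * X ω i)
        simp only [F, γ]
        linear_combination g (X ω) * this

/-- Asymptotic unbiasedness of the summands of the second (offset-adjusted)
estimating function.  If `X` has first coordinate identically `1`,
`P(Y = 1 | σ(X)) = expit(β₀ᵀX)` a.s., and `E[R | σ(Y,X)] = π(Y, s(X))` a.s. with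
`π` valued in `(0,1]` on `{0,1} × 𝒮`, then with
`γ(x) = β₀ᵀx + log(π(1, s(x))/π(0, s(x)))`, for every bounded measurable `g`,
`E[R (Y − expit(γ(X))) g(X)] = 0`. -/
theorem stmt7 {Ω : Type*} [MeasurableSpace Ω] (μ : Measure Ω) [IsProbabilityMeasure μ]
    {q : ℕ} {𝒮 : Type*} [MeasurableSpace 𝒮]
    (X : Ω → (Fin (q + 1) → ℝ)) (Y R : Ω → ℝ) (β₀ : Fin (q + 1) → ℝ)
    (s : (Fin (q + 1) → ℝ) → 𝒮) (π : ℝ → 𝒮 → ℝ)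
    (hX : Measurable X) (hY : Measurable Y) (hR : Measurable R) (hs : Measurable s)
    (hπ : Measurable fun p : ℝ × 𝒮 => π p.1 p.2)
    (hfirst : ∀ ω, X ω 0 = 1)
    (hY01 : ∀ ω, Y ω = 0 ∨ Y ω = 1) (hR01 : ∀ ω, R ω = 0 ∨ R ω = 1)
    (hπrange : ∀ y ∈ ({0, 1} : Set ℝ), ∀ st, π y st ∈ Set.Ioc (0 : ℝ) 1)
    (hmodel : μ[Y | MeasurableSpace.comap X inferInstance] =ᵐ[μ]
      fun ω => expit (∑ i, β₀ i * X ω i))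
    (hsel : μ[R | MeasurableSpace.comap (fun ω => (Y ω, X ω)) inferInstance] =ᵐ[μ]
      fun ω => π (Y ω) (s (X ω)))
    (g : (Fin (q + 1) → ℝ) → ℝ) (hgm : Measurable g) (M : ℝ) (hgb : ∀ x, |g x| ≤ M) :
    ∫ ω, R ω * ((Y ω - expit ((∑ i, β₀ i * X ω i) +
      Real.log (π 1 (s (X ω)) / π 0 (s (X ω))))) * g (X ω)) ∂μ = 0 :=
  stmt7_general μ X Y R β₀ s π hX hY hR hs hπ hY01 hR01 hπrange hmodel hsel g hgm M hgb
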